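/- arXiv:1710.10927 — 2 statements merged into one kernel-verified Lean document; each statement's English description precedes it below -/
import Mathlib

section
/- There exists a computable equivalence structure that is computably bi-embeddably categorical but not computably categorical. -/
/-- The equivalence class of `a` under the relation `E`. -/
def classOf (E : ℕ → ℕ → Prop) (a : ℕ) : Set ℕ := {x | E x a}

/-- `f` is an embedding of the equivalence structure `(ℕ, E)` into `(ℕ, E')`. -/
def IsEmb (E E' : ℕ → ℕ → Prop) (f : ℕ → ℕ) : Prop :=
  Function.Injective f ∧ ∀ x y, E x y ↔ E' (f x) (f y)

/-- Bi-embeddability of equivalence structures on ℕ. -/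
def BiEmb (E E' : ℕ → ℕ → Prop) : Prop :=
  (∃ f, IsEmb E E' f) ∧ (∃ g, IsEmb E' E g)

/-- `E` is a computable (decidable by a total computable function) binary relation. -/
def CompRelDec (E : ℕ → ℕ → Prop) : Prop :=
  ∃ f : ℕ → ℕ → Bool, Computable₂ f ∧ ∀ x y, E x y ↔ f x y = true

/-- The collection of infinite equivalence classes of `E`. -/
def InfClasses (E : ℕ → ℕ → Prop) : Set (Set ℕ) :=
  {C | (∃ a, C = classOf E a) ∧ C.Infinite}

/-- The collection of equivalence classes of `E` of size exactly `m`. -/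
def sizeClasses (E : ℕ → ℕ → Prop) (m : ℕ) : Set (Set ℕ) :=
  {C | (∃ a, C = classOf E a) ∧ C.Finite ∧ C.ncard = m}

/-- `E` has bounded character: some `k` bounds the size of every finite class. -/
def BoundedCharacter (E : ℕ → ℕ → Prop) : Prop :=
  ∃ k, ∀ a, (classOf E a).Finite → (classOf E a).ncard ≤ k

/-- `E` has unbounded character: finite classes of arbitrarily large size. -/
def UnboundedCharacter (E : ℕ → ℕ → Prop) : Prop :=
  ∀ k, ∃ a, (classOf E a).Finite ∧ k < (classOf E a).ncard

/-- `E` is computably bi-embeddably categorical. -/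
def CompBiembCat (E : ℕ → ℕ → Prop) : Prop :=
  ∀ E' : ℕ → ℕ → Prop, Equivalence E' → CompRelDec E' → BiEmb E E' →
    (∃ f, Computable f ∧ IsEmb E E' f) ∧ (∃ g, Computable g ∧ IsEmb E' E g)

/-- `f` is an isomorphism of `(ℕ, E)` onto `(ℕ, E')`. -/
def IsIso (E E' : ℕ → ℕ → Prop) (f : ℕ → ℕ) : Prop :=
  Function.Bijective f ∧ ∀ x y, E x y ↔ E' (f x) (f y)

/-- `E` is computably categorical. -/
def CompCat (E : ℕ → ℕ → Prop) : Prop :=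
  ∀ E' : ℕ → ℕ → Prop, Equivalence E' → CompRelDec E' → (∃ f, IsIso E' E f) →
    ∃ f, Computable f ∧ IsIso E' E f

/-- `W e` is the domain of the `e`-th partial computable function. -/
def W (e : ℕ) : Set ℕ :=
  {x | ((Denumerable.ofNat Nat.Partrec.Code e).eval x).Dom}

theorem computable_nat_find {α : Type*} [Primcodable α] {p : α → ℕ → Bool}
    (hp : Computable₂ p) (H : ∀ a, ∃ n, p a n = true) :
    Computable fun a => Nat.find (H a) := by
  have h1 : Partrec fun a => Nat.rfind (fun n => (Part.some (p a n) : Part Bool)) :=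
    Partrec.rfind (hp.partrec₂)
  refine Partrec.of_eq_tot h1 fun a => ?_
  refine Nat.mem_rfind.2 ?_
  constructor
  · simpa using Nat.find_spec (H a)
  · intro m hm
    simpa using Nat.find_min (H a) hm

/-- bounded conjunction as a Bool-valued function -/
def bball (p : ℕ → Bool) (n : ℕ) : Bool :=
  Nat.rec true (fun i b => b && p i) n

lemma bball_iff (p : ℕ → Bool) (n : ℕ) : bball p n = true ↔ ∀ i < n, p i = true := by
  induction n with
  | zero => simp [bball]
  | succ n ih =>
    show (bball p n && p n) = true ↔ _
    rw [Bool.and_eq_true, ih]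
    constructor
    · rintro ⟨h1, h2⟩ i hi
      rcases Nat.lt_succ_iff_lt_or_eq.1 hi with hi | rfl
      · exact h1 i hi
      · exact h2
    · intro h
      exact ⟨fun i hi => h i (hi.trans (Nat.lt_succ_self n)), h n (Nat.lt_succ_self n)⟩

lemma computable_bball {α : Type*} [Primcodable α] {p : α → ℕ → Bool} {g : α → ℕ}
    (hp : Computable₂ p) (hg : Computable g) :
    Computable fun a => bball (p a) (g a) := by
  have hh : Computable₂ fun (q : α) (ib : ℕ × Bool) => ib.2 && p q ib.1 := by
    have hc : Computable fun x : α × (ℕ × Bool) => x.2.2 :=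
      Computable.snd.comp Computable.snd
    have hf : Computable fun x : α × (ℕ × Bool) => p x.1 x.2.1 :=
      hp.comp Computable.fst (Computable.fst.comp Computable.snd)
    exact (Computable.cond hc hf (Computable.const false)).of_eq fun x => by
      cases h : x.2.2 <;> simp [h]
  exact (Computable.nat_rec hg (Computable.const true) hh).of_eq fun a => by
    simp only [bball]


/-- The base equivalence: classes `{4n, 4n+1}`, `{4n+2}`, `{4n+3}`. -/
def E0 (a b : ℕ) : Prop := a = b ∨ (a % 4 ≤ 1 ∧ b % 4 ≤ 1 ∧ a / 4 = b / 4)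

/-- index of the class of `x`. -/
def kidx (x : ℕ) : ℕ := 3 * (x / 4) + (if x % 4 ≤ 1 then 0 else x % 4 - 1)

lemma e0_iff_kidx {x y : ℕ} : E0 x y ↔ kidx x = kidx y := by
  have hx : x = 4 * (x / 4) + x % 4 := (Nat.div_add_mod x 4).symm.trans (by ring)
  have hy : y = 4 * (y / 4) + y % 4 := (Nat.div_add_mod y 4).symm.trans (by ring)
  have hx4 : x % 4 < 4 := Nat.mod_lt _ (by norm_num)
  have hy4 : y % 4 < 4 := Nat.mod_lt _ (by norm_num)
  unfold E0 kidx
  split_ifs with h1 h2 h2 <;> omega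

lemma e0_equiv : Equivalence E0 := by
  constructor
  · intro x; exact Or.inl rfl
  · intro x y h; rw [e0_iff_kidx] at *; omega
  · intro x y z h1 h2; rw [e0_iff_kidx] at *; omega

lemma e0_small {x y z : ℕ} (h1 : E0 x y) (h2 : E0 y z) : x = y ∨ y = z ∨ x = z := by
  by_contra hc
  push_neg at hc
  obtain ⟨hxy, hyz, hxz⟩ := hc
  have hx : x = 4 * (x / 4) + x % 4 := (Nat.div_add_mod x 4).symm.trans (by ring)
  have hy : y = 4 * (y / 4) + y % 4 := (Nat.div_add_mod y 4).symm.trans (by ring)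
  have hz : z = 4 * (z / 4) + z % 4 := (Nat.div_add_mod z 4).symm.trans (by ring)
  rcases h1 with h1 | ⟨ha, hb, hc⟩
  · exact hxy h1
  rcases h2 with h2 | ⟨ha', hb', hc'⟩
  · exact hyz h2
  omega

instance e0_dec : ∀ x y, Decidable (E0 x y) := fun x y => by unfold E0; infer_instance

lemma e0_comprel : ∃ f : ℕ → ℕ → Bool, Computable₂ f ∧ ∀ x y, E0 x y ↔ f x y = true := by
  refine ⟨fun x y => decide (E0 x y), ?_, fun x y => by simp⟩
  have h1 : PrimrecPred (fun p : ℕ × ℕ => p.1 = p.2) := Primrec.eq.comp .fst .snd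
  have h2 : PrimrecPred (fun p : ℕ × ℕ => p.1 % 4 ≤ 1) :=
    Primrec.nat_le.comp (Primrec.nat_mod.comp .fst (.const 4)) (.const 1)
  have h3 : PrimrecPred (fun p : ℕ × ℕ => p.2 % 4 ≤ 1) :=
    Primrec.nat_le.comp (Primrec.nat_mod.comp .snd (.const 4)) (.const 1)
  have h4 : PrimrecPred (fun p : ℕ × ℕ => p.1 / 4 = p.2 / 4) :=
    Primrec.eq.comp (Primrec.nat_div.comp .fst (.const 4)) (Primrec.nat_div.comp .snd (.const 4))
  have hP : PrimrecPred (fun p : ℕ × ℕ => E0 p.1 p.2) :=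
    (h1.or (h2.and (h3.and h4))).of_eq (fun p => by unfold E0; tauto)
  exact Primrec₂.to_comp (hP.decide : Primrec fun p : ℕ × ℕ => decide (E0 p.1 p.2))

section BackEmb

variable {R : ℕ → ℕ → Prop} {d : ℕ → ℕ → Bool}

lemma backward_emb (hR : Equivalence R) (hdc : Computable₂ d)
    (hd : ∀ x y, R x y ↔ d x y = true)
    (hsmall : ∀ x y z, R x y → R y z → x = y ∨ y = z ∨ x = z) :
    ∃ g, Computable g ∧ IsEmb R E0 g := by
  have Hm : ∀ x : ℕ, ∃ y, d y x = true := fun x => ⟨x, (hd x x).1 (hR.refl x)⟩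
  set m : ℕ → ℕ := fun x => Nat.find (Hm x) with hm_def
  have hmc : Computable m := by
    have : Computable₂ fun (a n : ℕ) => d n a :=
      ((hdc.comp Computable.snd Computable.fst : Computable fun p : ℕ × ℕ => d p.2 p.1)).to₂
    exact computable_nat_find this Hm
  have hmem : ∀ x, R (m x) x := fun x => (hd _ _).2 (Nat.find_spec (Hm x))
  have hmin : ∀ x y, R y x → m x ≤ y := fun x y hy => Nat.find_min' (Hm x) ((hd y x).1 hy)
  have hmeq : ∀ x y, R x y → m x = m y := by
    intro x y hxy
    have h1 : m x ≤ m y := hmin x (m y) (hR.trans (hmem y) (hR.symm hxy))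
    have h2 : m y ≤ m x := hmin y (m x) (hR.trans (hmem x) hxy)
    omega
  have hmR : ∀ x y, m x = m y → R x y := by
    intro x y h
    have := hmem x
    rw [h] at this
    exact hR.trans (hR.symm this) (hmem y)
  set g : ℕ → ℕ := fun x => if m x = x then 4 * x else 4 * m x + 1 with hg_def
  have hgc : Computable g := by
    have hc : Computable fun x : ℕ => decide (m x = x) :=
      (Primrec.eq.decide.to_comp.comp hmc Computable.id : Computable fun x : ℕ => decide (m x = x))
    have h1 : Computable fun x : ℕ => 4 * x :=
      (Primrec.nat_mul.comp (Primrec.const 4) Primrec.id).to_comp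
    have h2 : Computable fun x : ℕ => 4 * m x + 1 :=
      (Primrec.succ.to_comp).comp
        ((Primrec.nat_mul.to_comp).comp (Computable.const 4) hmc)
    exact (Computable.cond hc h1 h2).of_eq fun x => by
      by_cases h : m x = x <;> simp [g, h]
  have hgdiv : ∀ x, g x / 4 = m x := by
    intro x
    by_cases h : m x = x <;> simp [g, h] <;> omega
  have hgmod : ∀ x, g x % 4 ≤ 1 := by
    intro x
    by_cases h : m x = x <;> simp [g, h] <;> omega
  refine ⟨g, hgc, ?_, ?_⟩
  · -- injective
    intro x y hxy
    have hmxy : m x = m y := by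
      have := congrArg (· / 4) hxy
      simpa [hgdiv] using this
    have hRxy : R x y := hmR _ _ hmxy
    by_cases hx : m x = x <;> by_cases hy : m y = y
    · omega
    · exfalso; simp only [g, if_pos hx, if_neg hy] at hxy; omega
    · exfalso; simp only [g, if_neg hx, if_pos hy] at hxy; omega
    · -- both not minimal
      by_contra hne
      rcases hsmall x (m x) y (hR.symm (hmem x)) (hR.trans (hmem x) hRxy) with h | h | h
      · exact hx h.symm
      · rw [hmxy] at h; exact hy h
      · exact hne h
  · -- relation preservation
    intro x y
    constructor
    · intro h
      have : m x = m y := hmeq _ _ h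
      right
      exact ⟨hgmod x, hgmod y, by rw [hgdiv, hgdiv, this]⟩
    · intro h
      rcases h with h | ⟨_, _, h⟩
      · have : m x = m y := by
          have := congrArg (· / 4) h
          simpa [hgdiv] using this
        exact hmR _ _ this
      · rw [hgdiv, hgdiv] at h
        exact hmR _ _ h

end BackEmb

section ForwardEmb

/-- `c` is the canonical code of a 2-element class: `c = pair a b` with `a < b`,
`a R b`, and `a` minimal in its class. -/
def CanB (d : ℕ → ℕ → Bool) (c : ℕ) : Bool :=
  decide (c.unpair.1 < c.unpair.2) && d c.unpair.1 c.unpair.2 &&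
    bball (fun y => !(d y c.unpair.1)) c.unpair.1

variable {R : ℕ → ℕ → Prop} {d : ℕ → ℕ → Bool}

lemma canB_iff (hd : ∀ x y, R x y ↔ d x y = true) (c : ℕ) :
    CanB d c = true ↔
      c.unpair.1 < c.unpair.2 ∧ R c.unpair.1 c.unpair.2 ∧
        ∀ y < c.unpair.1, ¬ R y c.unpair.1 := by
  unfold CanB
  rw [Bool.and_eq_true, Bool.and_eq_true, bball_iff, decide_eq_true_eq]
  constructor
  · rintro ⟨⟨h1, h2⟩, h3⟩
    refine ⟨h1, (hd _ _).2 h2, fun y hy hR => ?_⟩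
    have := h3 y hy
    rw [(hd _ _).1 hR] at this
    simp at this
  · rintro ⟨h1, h2, h3⟩
    refine ⟨⟨h1, (hd _ _).1 h2⟩, fun y hy => ?_⟩
    have : ¬ d y c.unpair.1 = true := fun h => h3 y hy ((hd _ _).2 h)
    simp [Bool.not_eq_true] at this ⊢
    exact this

lemma canB_computable (hdc : Computable₂ d) : Computable (CanB d) := by
  have h1 : Computable fun c : ℕ => decide (c.unpair.1 < c.unpair.2) :=
    (Primrec.nat_lt.comp (Primrec.fst.comp Primrec.unpair)
      (Primrec.snd.comp Primrec.unpair)).decide.to_comp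
  have h2 : Computable fun c : ℕ => d c.unpair.1 c.unpair.2 :=
    hdc.comp (Computable.fst.comp Computable.unpair) (Computable.snd.comp Computable.unpair)
  have h3 : Computable fun c : ℕ => bball (fun y => !(d y c.unpair.1)) c.unpair.1 := by
    have hp : Computable₂ fun (c y : ℕ) => !(d y c.unpair.1) := by
      have h0 : Computable fun p : ℕ × ℕ => d p.2 p.1.unpair.1 :=
        hdc.comp Computable.snd ((Computable.fst.comp Computable.unpair).comp Computable.fst)
      have h5 : Computable fun p : ℕ × ℕ => !(d p.2 p.1.unpair.1) :=
        (Computable.cond h0 (Computable.const false) (Computable.const true)).of_eq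
          fun p => by cases h : d p.2 p.1.unpair.1 <;> simp [h]
      exact Computable₂.mk h5
    exact computable_bball hp (Computable.fst.comp Computable.unpair)
  have hand : ∀ c, CanB d c =
      ((decide (c.unpair.1 < c.unpair.2) && d c.unpair.1 c.unpair.2) &&
        bball (fun y => !(d y c.unpair.1)) c.unpair.1) := fun c => rfl
  have hb1 : Computable fun c : ℕ =>
      (decide (c.unpair.1 < c.unpair.2) && d c.unpair.1 c.unpair.2) :=
    (Computable.cond h1 h2 (Computable.const false)).of_eq fun c => by
      cases h : decide (c.unpair.1 < c.unpair.2) <;> simp [h]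
  exact ((Computable.cond hb1 h3 (Computable.const false)).of_eq fun c => by
    cases h : (decide (c.unpair.1 < c.unpair.2) && d c.unpair.1 c.unpair.2) <;>
      simp [hand, h])

lemma forward_emb (hR : Equivalence R) (hdc : Computable₂ d)
    (hd : ∀ x y, R x y ↔ d x y = true)
    (hsmall : ∀ x y z, R x y → R y z → x = y ∨ y = z ∨ x = z)
    (hmany : ∀ N : ℕ, ∃ c, N < c ∧ CanB d c = true) :
    ∃ f, Computable f ∧ IsEmb E0 R f := by
  -- the "next canonical code" function
  have Hn : ∀ x : ℕ, ∃ c, (decide (x < c) && CanB d c) = true := by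
    intro x
    obtain ⟨c, hc1, hc2⟩ := hmany x
    exact ⟨c, by simp [hc1, hc2]⟩
  set next : ℕ → ℕ := fun x => Nat.find (Hn x) with hnext_def
  have hnextc : Computable next := by
    refine computable_nat_find ?_ Hn
    have h1 : Computable fun p : ℕ × ℕ => decide (p.1 < p.2) :=
      (Primrec.nat_lt.comp Primrec.fst Primrec.snd).decide.to_comp
    have h2 : Computable fun p : ℕ × ℕ => CanB d p.2 :=
      (canB_computable hdc).comp Computable.snd
    have h5 : Computable fun p : ℕ × ℕ => (decide (p.1 < p.2) && CanB d p.2) :=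
      (Computable.cond h1 h2 (Computable.const false)).of_eq fun p => by
        cases h : decide (p.1 < p.2) <;> simp [h]
    exact Computable₂.mk h5
  have hns : ∀ x, (decide (x < next x) && CanB d (next x)) = true := fun x => by
    rw [hnext_def]
    exact Nat.find_spec (Hn x)
  have hnext_gt : ∀ x, x < next x := fun x => by
    have := hns x
    simp only [Bool.and_eq_true, decide_eq_true_eq] at this
    exact this.1
  have hnext_can : ∀ x, CanB d (next x) = true := fun x => by
    have := hns x
    simp only [Bool.and_eq_true, decide_eq_true_eq] at this
    exact this.2
  -- the sequence of canonical codes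
  set cseq : ℕ → ℕ := fun k => Nat.rec (next 0) (fun _ prev => next prev) k with hcseq_def
  have hcseqc : Computable cseq := by
    have := Computable.nat_rec (α := ℕ) (σ := ℕ) (f := id) (g := fun _ => next 0)
      (h := fun _ ib => next ib.2) Computable.id (Computable.const (next 0))
      (hnextc.comp (Computable.snd.comp Computable.snd)).to₂
    exact this.of_eq fun k => by rfl
  have hcs_can : ∀ k, CanB d (cseq k) = true := by
    intro k
    cases k with
    | zero => exact hnext_can 0
    | succ k => exact hnext_can (cseq k)
  have hcs_mono : StrictMono cseq := strictMono_nat_of_lt_succ fun k => hnext_gt (cseq k)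
  set a : ℕ → ℕ := fun k => (cseq k).unpair.1 with ha_def
  set b : ℕ → ℕ := fun k => (cseq k).unpair.2 with hb_def
  have hab : ∀ k, a k < b k ∧ R (a k) (b k) ∧ ∀ y < a k, ¬ R y (a k) :=
    fun k => (canB_iff hd (cseq k)).1 (hcs_can k)
  -- distinct indices give inequivalent classes
  have hdist : ∀ j k, j ≠ k → ¬ R (a j) (a k) := by
    intro j k hjk hRjk
    have haeq : a j = a k := by
      rcases Nat.lt_trichotomy (a j) (a k) with h | h | h
      · exact absurd hRjk ((hab k).2.2 (a j) h)
      · exact h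
      · exact absurd (hR.symm hRjk) ((hab j).2.2 (a k) h)
    have hbeq : b j = b k := by
      by_contra hne
      have h1 : R (b j) (a j) := hR.symm (hab j).2.1
      have h2 : R (a j) (b k) := haeq ▸ (hab k).2.1
      rcases hsmall (b j) (a j) (b k) h1 h2 with h | h | h
      · exact absurd h (Nat.ne_of_gt (hab j).1)
      · rw [haeq] at h; exact absurd h (Nat.ne_of_lt (hab k).1)
      · exact hne h
    have : cseq j = cseq k := by
      have hj : cseq j = Nat.pair (a j) (b j) := by
        simp [a, b, Nat.pair_unpair]
      have hk : cseq k = Nat.pair (a k) (b k) := by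
        simp [a, b, Nat.pair_unpair]
      rw [hj, hk, haeq, hbeq]
    exact hjk (hcs_mono.injective this)
  -- the embedding
  set f : ℕ → ℕ := fun x => if x % 4 = 1 then b (kidx x) else a (kidx x) with hf_def
  have hfc : Computable f := by
    have hkidx : Primrec kidx := by
      unfold kidx
      have h1 : Primrec fun x : ℕ => 3 * (x / 4) :=
        Primrec.nat_mul.comp (Primrec.const 3) (Primrec.nat_div.comp Primrec.id (Primrec.const 4))
      have h2 : Primrec fun x : ℕ => (if x % 4 ≤ 1 then 0 else x % 4 - 1) := by
        refine Primrec.ite ?_ (Primrec.const 0) ?_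
        · exact Primrec.nat_le.comp (Primrec.nat_mod.comp Primrec.id (Primrec.const 4))
            (Primrec.const 1)
        · exact Primrec.nat_sub.comp (Primrec.nat_mod.comp Primrec.id (Primrec.const 4))
            (Primrec.const 1)
      exact Primrec.nat_add.comp h1 h2
    have hac : Computable fun x : ℕ => a (kidx x) :=
      (Computable.fst.comp Computable.unpair).comp (hcseqc.comp hkidx.to_comp)
    have hbc : Computable fun x : ℕ => b (kidx x) :=
      (Computable.snd.comp Computable.unpair).comp (hcseqc.comp hkidx.to_comp)
    have hcnd : Computable fun x : ℕ => decide (x % 4 = 1) :=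
      (Primrec.eq.comp (Primrec.nat_mod.comp Primrec.id (Primrec.const 4))
        (Primrec.const 1)).decide.to_comp
    exact (Computable.cond hcnd hbc hac).of_eq fun x => by
      by_cases h : x % 4 = 1 <;> simp [f, h]
  -- membership of f x in the class of `a (kidx x)`
  have hfcl : ∀ x, R (f x) (a (kidx x)) := by
    intro x
    by_cases h : x % 4 = 1 <;> simp only [f, if_pos, if_neg, h, if_true, if_false]
    · exact hR.symm (hab (kidx x)).2.1
    · exact hR.refl _
  have hpres : ∀ x y, E0 x y ↔ R (f x) (f y) := by
    intro x y
    rw [e0_iff_kidx]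
    constructor
    · intro h
      exact hR.trans (hfcl x) (h ▸ hR.symm (hfcl y))
    · intro h
      by_contra hne
      exact hdist _ _ hne (hR.trans (hR.symm (hfcl x)) (hR.trans h (hfcl y)))
  refine ⟨f, hfc, ?_, hpres⟩
  -- injectivity
  intro x y hxy
  have hk : kidx x = kidx y := by
    rw [← e0_iff_kidx] at *
    exact (hpres x y).2 (hxy ▸ hR.refl (f x))
  have hx4 : x % 4 < 4 := Nat.mod_lt _ (by norm_num)
  have hy4 : y % 4 < 4 := Nat.mod_lt _ (by norm_num)
  have hxd : x = 4 * (x / 4) + x % 4 := (Nat.div_add_mod x 4).symm.trans (by ring)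
  have hyd : y = 4 * (y / 4) + y % 4 := (Nat.div_add_mod y 4).symm.trans (by ring)
  by_cases h1 : x % 4 = 1 <;> by_cases h2 : y % 4 = 1
  · -- both second elements
    unfold kidx at hk
    split_ifs at hk <;> omega
  · exfalso
    simp only [f, if_pos h1, if_neg h2] at hxy
    rw [hk] at hxy
    exact Nat.ne_of_gt (hab (kidx y)).1 hxy
  · exfalso
    simp only [f, if_neg h1, if_pos h2] at hxy
    rw [hk] at hxy
    exact Nat.ne_of_gt (hab (kidx y)).1 hxy.symm
  · unfold kidx at hk
    split_ifs at hk <;> omega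

end ForwardEmb

section Many

variable {R : ℕ → ℕ → Prop} {d : ℕ → ℕ → Bool}

lemma small_of_emb {h : ℕ → ℕ} (hh : IsEmb R E0 h) :
    ∀ x y z, R x y → R y z → x = y ∨ y = z ∨ x = z := by
  intro x y z hxy hyz
  rcases e0_small ((hh.2 x y).1 hxy) ((hh.2 y z).1 hyz) with h1 | h1 | h1
  · exact Or.inl (hh.1 h1)
  · exact Or.inr (Or.inl (hh.1 h1))
  · exact Or.inr (Or.inr (hh.1 h1))

lemma many_canonical (hR : Equivalence R) (hd : ∀ x y, R x y ↔ d x y = true)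
    (hsmall : ∀ x y z, R x y → R y z → x = y ∨ y = z ∨ x = z)
    {h : ℕ → ℕ} (hh : IsEmb E0 R h) :
    ∀ N : ℕ, ∃ c, N < c ∧ CanB d c = true := by
  classical
  -- for each n, the canonical code of the class of h (4n)
  have hcls : ∀ n : ℕ, R (h (4 * n)) (h (4 * n + 1)) := by
    intro n
    refine (hh.2 _ _).1 (Or.inr ⟨?_, ?_, ?_⟩) <;> omega
  have hne : ∀ n : ℕ, h (4 * n) ≠ h (4 * n + 1) := by
    intro n heq
    have := hh.1 heq
    omega
  set u : ℕ → ℕ := fun n => sInf {y | R y (h (4 * n))} with hu_def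
  have hu_mem : ∀ n, R (u n) (h (4 * n)) :=
    fun n => Nat.sInf_mem (⟨h (4 * n), hR.refl _⟩ : {y | R y (h (4 * n))}.Nonempty)
  have hu_min : ∀ n y, R y (h (4 * n)) → u n ≤ y := fun n y hy => Nat.sInf_le hy
  set v : ℕ → ℕ := fun n => sInf {y | R y (h (4 * n)) ∧ y ≠ u n} with hv_def
  have hv_ne : ∀ n, {y | R y (h (4 * n)) ∧ y ≠ u n}.Nonempty := by
    intro n
    by_cases hc : u n = h (4 * n)
    · exact ⟨h (4 * n + 1), hR.symm (hcls n), fun he => hne n (hc ▸ he.symm ▸ rfl)⟩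
    · exact ⟨h (4 * n), hR.refl _, fun he => hc he.symm⟩
  have hv_mem : ∀ n, R (v n) (h (4 * n)) ∧ v n ≠ u n := fun n => Nat.sInf_mem (hv_ne n)
  have huv : ∀ n, u n < v n := by
    intro n
    have h1 : u n ≤ v n := hu_min n _ (hv_mem n).1
    rcases lt_of_le_of_ne h1 (fun he => (hv_mem n).2 he.symm) with h2
    exact h2
  have hcan : ∀ n, CanB d (Nat.pair (u n) (v n)) = true := by
    intro n
    rw [canB_iff hd]
    simp only [Nat.unpair_pair]
    refine ⟨huv n, hR.trans (hu_mem n) (hR.symm (hv_mem n).1), ?_⟩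
    intro y hy hRy
    have : u n ≤ y := hu_min n y (hR.trans hRy (hu_mem n))
    omega
  have hinj : Function.Injective fun n => Nat.pair (u n) (v n) := by
    intro n n' he
    simp only [Nat.pair_eq_pair] at he
    have hR' : R (h (4 * n)) (h (4 * n')) :=
      hR.trans (hR.symm (hu_mem n)) (he.1 ▸ hu_mem n')
    have := (hh.2 _ _).2 hR'
    rcases this with h1 | ⟨_, _, h1⟩ <;> omega
  have hInf : {c | CanB d c = true}.Infinite :=
    Set.infinite_of_injective_forall_mem hinj fun n => hcan n
  intro N
  obtain ⟨c, hc1, hc2⟩ := hInf.exists_gt N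
  exact ⟨c, hc2, hc1⟩

end Many

lemma e0_biembcat : CompBiembCat E0 := by
  intro R hR hC hbi
  obtain ⟨d, hdc, hd⟩ := hC
  obtain ⟨⟨h, hh⟩, ⟨h', hh'⟩⟩ := hbi
  have hsmall := small_of_emb hh'
  constructor
  · exact forward_emb hR hdc hd hsmall (many_canonical hR hd hsmall hh)
  · exact backward_emb hR hdc hd hsmall

section IsoLemma

/-- elements in 2-element classes -/
def DD (R : ℕ → ℕ → Prop) : Set ℕ := {x | ∃ y, R y x ∧ y ≠ x}

/-- elements in singleton classes -/
def SingS (R : ℕ → ℕ → Prop) : Set ℕ := {x | ∀ y, R y x → y = x}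

/-- minima of 2-element classes -/
def MinD (R : ℕ → ℕ → Prop) : Set ℕ := {x | x ∈ DD R ∧ ∀ y < x, ¬ R y x}

/-- minimum of the class of `x` -/
noncomputable def mu (R : ℕ → ℕ → Prop) (x : ℕ) : ℕ := sInf {y | R y x}

/-- partner of `x` -/
noncomputable def pt (R : ℕ → ℕ → Prop) (x : ℕ) : ℕ := sInf {y | R y x ∧ y ≠ x}

variable {R : ℕ → ℕ → Prop}

lemma sing_iff_not_dd : ∀ x, x ∈ SingS R ↔ x ∉ DD R := by
  intro x
  constructor
  · rintro hs ⟨y, h1, h2⟩; exact h2 (hs y h1)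
  · intro hd y hy
    by_contra hne
    exact hd ⟨y, hy, hne⟩

lemma dd_of_not_sing {x : ℕ} (hx : x ∉ SingS R) : x ∈ DD R :=
  not_not.mp (fun h => hx ((sing_iff_not_dd x).2 h))

lemma mu_mem (hR : Equivalence R) (x : ℕ) : R (mu R x) x :=
  Nat.sInf_mem (⟨x, hR.refl x⟩ : {y | R y x}.Nonempty)

lemma mu_min (y x : ℕ) (h : R y x) : mu R x ≤ y := Nat.sInf_le h

lemma mu_eq_iff (hR : Equivalence R) (x y : ℕ) : R x y ↔ mu R x = mu R y := by
  constructor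
  · intro h
    have : {z | R z x} = {z | R z y} := by
      ext z
      exact ⟨fun hz => hR.trans hz h, fun hz => hR.trans hz (hR.symm h)⟩
    unfold mu
    rw [this]
  · intro h
    exact hR.trans (hR.symm (h ▸ mu_mem hR x)) (mu_mem hR y)

lemma pt_mem (x : ℕ) (hx : x ∈ DD R) : R (pt R x) x ∧ pt R x ≠ x :=
  Nat.sInf_mem (hx : {y | R y x ∧ y ≠ x}.Nonempty)

lemma pt_unique (hR : Equivalence R)
    (hsmall : ∀ x y z, R x y → R y z → x = y ∨ y = z ∨ x = z)
    {x y : ℕ} (hy : R y x) (hne : y ≠ x) : y = pt R x := by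
  have hx : x ∈ DD R := ⟨y, hy, hne⟩
  obtain ⟨h1, h2⟩ := pt_mem x hx
  rcases hsmall y x (pt R x) hy (hR.symm h1) with h | h | h
  · exact absurd h hne
  · exact absurd h.symm h2
  · exact h

lemma mu_mem_minD (hR : Equivalence R) {x : ℕ} (hx : x ∈ DD R) : mu R x ∈ MinD R := by
  constructor
  · by_cases h : x = mu R x
    · obtain ⟨h1, h2⟩ := pt_mem x hx
      exact ⟨pt R x, h ▸ h1, h ▸ h2⟩
    · exact ⟨x, hR.symm (mu_mem hR x), h⟩
  · intro y hy hRy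
    have := mu_min y x (hR.trans hRy (mu_mem hR x))
    omega

lemma minD_mu_eq (hR : Equivalence R) {x : ℕ} (hx : x ∈ MinD R) : mu R x = x := by
  have h1 : mu R x ≤ x := mu_min x x (hR.refl x)
  rcases lt_or_eq_of_le h1 with h | h
  · exact absurd (mu_mem hR x) (hx.2 _ h)
  · exact h

lemma pt_gt (hR : Equivalence R) {z : ℕ} (hz : z ∈ MinD R) : z < pt R z := by
  obtain ⟨h1, h2⟩ := pt_mem z hz.1
  rcases Nat.lt_trichotomy (pt R z) z with h | h | h
  · exact absurd h1 (hz.2 _ h)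
  · exact absurd h h2
  · exact h

lemma pt_mem_dd (hR : Equivalence R) {z : ℕ} (hz : z ∈ MinD R) :
    pt R z ∈ DD R ∧ pt R z ∉ MinD R := by
  obtain ⟨h1, h2⟩ := pt_mem z hz.1
  refine ⟨⟨z, hR.symm h1, Ne.symm h2⟩, fun hmem => ?_⟩
  exact hmem.2 z (pt_gt hR hz) (hR.symm h1)

lemma mu_pt (hR : Equivalence R) {z : ℕ} (hz : z ∈ MinD R) : mu R (pt R z) = z := by
  have h1 : R (pt R z) z := (pt_mem z hz.1).1
  rw [(mu_eq_iff hR (pt R z) z).1 h1]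
  exact minD_mu_eq hR hz

lemma eq_pt_mu (hR : Equivalence R)
    (hsmall : ∀ x y z, R x y → R y z → x = y ∨ y = z ∨ x = z)
    {x : ℕ} (hx : x ∈ DD R) (hnm : x ∉ MinD R) : x = pt R (mu R x) := by
  have hmm : mu R x ∈ MinD R := mu_mem_minD hR hx
  have hne : x ≠ mu R x := fun h => hnm (h ▸ hmm)
  exact pt_unique hR hsmall (hR.symm (mu_mem hR x)) hne

lemma iso_exists {R R' : ℕ → ℕ → Prop}
    (hR : Equivalence R) (hR' : Equivalence R')
    (hsmall : ∀ x y z, R x y → R y z → x = y ∨ y = z ∨ x = z)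
    (hsmall' : ∀ x y z, R' x y → R' y z → x = y ∨ y = z ∨ x = z)
    (hS : (SingS R).Infinite) (hS' : (SingS R').Infinite)
    (hM : (MinD R).Infinite) (hM' : (MinD R').Infinite) :
    ∃ f : ℕ → ℕ, Function.Bijective f ∧ ∀ x y, R x y ↔ R' (f x) (f y) := by
  classical
  -- equivalences between the singleton parts and the minima parts
  haveI i1 : Infinite (SingS R) := hS.to_subtype
  haveI i2 : Infinite (SingS R') := hS'.to_subtype
  haveI i3 : Infinite (MinD R) := hM.to_subtype
  haveI i4 : Infinite (MinD R') := hM'.to_subtype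
  obtain ⟨d1⟩ : Nonempty (Denumerable (SingS R)) :=
    nonempty_denumerable_iff.2 ⟨inferInstance, inferInstance⟩
  obtain ⟨d2⟩ : Nonempty (Denumerable (SingS R')) :=
    nonempty_denumerable_iff.2 ⟨inferInstance, inferInstance⟩
  obtain ⟨d3⟩ : Nonempty (Denumerable (MinD R)) :=
    nonempty_denumerable_iff.2 ⟨inferInstance, inferInstance⟩
  obtain ⟨d4⟩ : Nonempty (Denumerable (MinD R')) :=
    nonempty_denumerable_iff.2 ⟨inferInstance, inferInstance⟩
  set e1 : SingS R ≃ SingS R' := (@Denumerable.eqv _ d1).trans (@Denumerable.eqv _ d2).symm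
  set e2 : MinD R ≃ MinD R' := (@Denumerable.eqv _ d3).trans (@Denumerable.eqv _ d4).symm
  -- the map
  set f : ℕ → ℕ := fun x =>
    if hx : x ∈ SingS R then (e1 ⟨x, hx⟩ : ℕ)
    else if hm : x ∈ MinD R then (e2 ⟨x, hm⟩ : ℕ)
    else pt R' (e2 ⟨mu R x, mu_mem_minD hR (dd_of_not_sing hx)⟩)
    with hf_def
  -- basic facts about membership
  have hnsing_of : ∀ {x : ℕ}, x ∈ DD R → x ∉ SingS R :=
    fun {x} hx hs => (sing_iff_not_dd x).1 hs hx
  have hnsing_of' : ∀ {x : ℕ}, x ∈ DD R' → x ∉ SingS R' :=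
    fun {x} hx hs => (sing_iff_not_dd x).1 hs hx
  -- computation rules
  have hf_sing : ∀ {x : ℕ} (hx : x ∈ SingS R), f x = (e1 ⟨x, hx⟩ : ℕ) := by
    intro x hx
    simp only [hf_def, dif_pos hx]
  have hf_min : ∀ {x : ℕ} (hx : x ∈ MinD R), f x = (e2 ⟨x, hx⟩ : ℕ) := by
    intro x hx
    have h1 : x ∉ SingS R := hnsing_of hx.1
    simp only [hf_def, dif_neg h1, dif_pos hx]
  have hf_oth : ∀ {x : ℕ} (hx : x ∈ DD R) (hnm : x ∉ MinD R),
      f x = pt R' (e2 ⟨mu R x, mu_mem_minD hR hx⟩) := by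
    intro x hx hnm
    simp only [hf_def, dif_neg (hnsing_of hx), dif_neg hnm]
  -- classification of images
  have him_sing : ∀ {x : ℕ} (hx : x ∈ SingS R), f x ∈ SingS R' := by
    intro x hx
    rw [hf_sing hx]
    exact (e1 ⟨x, hx⟩).2
  have him_min : ∀ {x : ℕ} (hx : x ∈ MinD R), f x ∈ MinD R' := by
    intro x hx
    rw [hf_min hx]
    exact (e2 ⟨x, hx⟩).2
  have him_oth : ∀ {x : ℕ} (hx : x ∈ DD R) (hnm : x ∉ MinD R),
      f x ∈ DD R' ∧ f x ∉ MinD R' := by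
    intro x hx hnm
    rw [hf_oth hx hnm]
    exact pt_mem_dd hR' (e2 ⟨mu R x, mu_mem_minD hR hx⟩).2
  have him_dd : ∀ {x : ℕ}, x ∈ DD R → f x ∈ DD R' := by
    intro x hx
    by_cases hm : x ∈ MinD R
    · exact (him_min hm).1
    · exact (him_oth hx hm).1
  -- image minima
  have hmu_im : ∀ {x : ℕ} (hx : x ∈ DD R),
      mu R' (f x) = (e2 ⟨mu R x, mu_mem_minD hR hx⟩ : ℕ) := by
    intro x hx
    by_cases hm : x ∈ MinD R
    · rw [hf_min hm, minD_mu_eq hR' (e2 ⟨x, hm⟩).2]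
      congr 2
      exact Subtype.ext (minD_mu_eq hR hm).symm
    · rw [hf_oth hx hm, mu_pt hR' (e2 ⟨mu R x, mu_mem_minD hR hx⟩).2]
  -- relation preservation
  have hpres : ∀ x y, R x y ↔ R' (f x) (f y) := by
    intro x y
    by_cases hx : x ∈ SingS R <;> by_cases hy : y ∈ SingS R
    · -- both singletons
      constructor
      · intro h
        rw [hy x h]
        exact hR'.refl _
      · intro h
        have h2 : f x = f y := (him_sing hy) (f x) h
        rw [hf_sing hx, hf_sing hy] at h2
        have : (⟨x, hx⟩ : SingS R) = ⟨y, hy⟩ := e1.injective (Subtype.ext h2)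
        rw [Subtype.mk_eq_mk.1 this]
        exact hR.refl _
    · -- x singleton, y doubled
      have hyd := dd_of_not_sing hy
      constructor
      · intro h
        have hyx : y = x := hx y (hR.symm h)
        exact absurd (hyx ▸ hyd) ((sing_iff_not_dd x).1 hx)
      · intro h
        have h2 : f y = f x := (him_sing hx) (f y) (hR'.symm h)
        have hfx : f x ∈ DD R' := h2 ▸ him_dd hyd
        exact absurd hfx ((sing_iff_not_dd (f x)).1 (him_sing hx))
    · -- x doubled, y singleton
      have hxd := dd_of_not_sing hx
      constructor
      · intro h
        have hxy2 : x = y := hy x h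
        exact absurd (hxy2 ▸ hxd) ((sing_iff_not_dd y).1 hy)
      · intro h
        have h2 : f x = f y := (him_sing hy) (f x) h
        have hfy : f y ∈ DD R' := h2 ▸ him_dd hxd
        exact absurd hfy ((sing_iff_not_dd (f y)).1 (him_sing hy))
    · -- both doubled
      have hxd := dd_of_not_sing hx
      have hyd := dd_of_not_sing hy
      rw [mu_eq_iff hR x y, mu_eq_iff hR' (f x) (f y), hmu_im hxd, hmu_im hyd]
      constructor
      · intro h
        congr 2
        exact Subtype.ext h
      · intro h
        have : (⟨mu R x, _⟩ : MinD R) = ⟨mu R y, _⟩ := e2.injective (Subtype.ext h)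
        exact Subtype.mk_eq_mk.1 this
  -- injectivity
  have hinj : Function.Injective f := by
    intro x y hxy
    have hRxy : R x y := (hpres x y).2 (hxy ▸ hR'.refl (f x))
    by_cases hx : x ∈ SingS R
    · exact (hx y (hR.symm hRxy)).symm
    · have hxd := dd_of_not_sing hx
      have hyd : y ∈ DD R := by
        by_contra hy'
        have hy2 : y ∈ SingS R := (sing_iff_not_dd y).2 hy'
        have hxy2 : x = y := hy2 x hRxy
        exact hx (by rw [hxy2]; exact hy2)
      by_cases hmx : x ∈ MinD R <;> by_cases hmy : y ∈ MinD R
      · rw [hf_min hmx, hf_min hmy] at hxy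
        exact Subtype.mk_eq_mk.1 (e2.injective (Subtype.ext hxy))
      · exfalso
        exact ((him_oth hyd hmy).2) (hxy ▸ him_min hmx)
      · exfalso
        exact ((him_oth hxd hmx).2) (hxy ▸ him_min hmy)
      · have h1 : mu R' (f x) = mu R' (f y) := by rw [hxy]
        rw [hmu_im hxd, hmu_im hyd] at h1
        have h2 : mu R x = mu R y :=
          Subtype.mk_eq_mk.1 (e2.injective (Subtype.ext h1))
        rw [eq_pt_mu hR hsmall hxd hmx, eq_pt_mu hR hsmall hyd hmy, h2]
  -- surjectivity
  have hsurj : Function.Surjective f := by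
    intro w
    by_cases hw : w ∈ SingS R'
    · obtain ⟨x, hx⟩ := e1.surjective ⟨w, hw⟩
      exact ⟨x.1, by rw [hf_sing x.2]; rw [Subtype.coe_eta, hx]⟩
    · have hwd : w ∈ DD R' := dd_of_not_sing hw
      by_cases hmw : w ∈ MinD R'
      · obtain ⟨z, hz⟩ := e2.surjective ⟨w, hmw⟩
        exact ⟨z.1, by rw [hf_min z.2]; rw [Subtype.coe_eta, hz]⟩
      · -- w is a non-minimal doubled element
        have hwp : w = pt R' (mu R' w) := eq_pt_mu hR' hsmall' hwd hmw
        have hmem : mu R' w ∈ MinD R' := mu_mem_minD hR' hwd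
        obtain ⟨z, hz⟩ := e2.surjective ⟨mu R' w, hmem⟩
        refine ⟨pt R z.1, ?_⟩
        have hz1 : (z : ℕ) ∈ MinD R := z.2
        have hdd1 : pt R z.1 ∈ DD R ∧ pt R z.1 ∉ MinD R := pt_mem_dd hR hz1
        rw [hf_oth hdd1.1 hdd1.2]
        have hmu1 : mu R (pt R z.1) = z.1 := mu_pt hR hz1
        have : (⟨mu R (pt R z.1), mu_mem_minD hR hdd1.1⟩ : MinD R) = z :=
          Subtype.ext hmu1
        rw [this, hz]
        exact hwp.symm
  exact ⟨f, ⟨hinj, hsurj⟩, hpres⟩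

end IsoLemma

section E1Sect

open Nat.Partrec (Code)
open Nat.Partrec.Code

/-- stage-`s` halting approximation -/
def hB (n s : ℕ) : Bool :=
  if n % 2 = 0 then decide (1 ≤ s)
  else (evaln s (Denumerable.ofNat Code (n / 2)) 0).isSome

/-- `n` "first halts" at stage `s` -/
def fsB (n s : ℕ) : Bool := hB n (s + 1) && !hB n s

/-- `⟨n, t⟩` is the partner of `⟨n, 0⟩` -/
def pB (n t : ℕ) : Bool := decide (1 ≤ t) && fsB n (t - 1)

/-- the second equivalence relation: `⟨n,0⟩ ~ ⟨n,s+1⟩` where `s` is the least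
stage at which `n` halts; everything else is a singleton. -/
def E1 (x y : ℕ) : Prop :=
  x = y ∨ (x.unpair.1 = y.unpair.1 ∧
    ((x.unpair.2 = 0 ∧ pB x.unpair.1 y.unpair.2 = true) ∨
     (y.unpair.2 = 0 ∧ pB x.unpair.1 x.unpair.2 = true)))

lemma hB_mono {n s t : ℕ} (hst : s ≤ t) (h : hB n s = true) : hB n t = true := by
  unfold hB at *
  split_ifs at * with h1
  · simp only [decide_eq_true_eq] at *; omega
  · rw [Option.isSome_iff_exists] at *
    obtain ⟨x, hx⟩ := h
    exact ⟨x, evaln_mono hst hx⟩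

lemma hB_zero (n : ℕ) : hB n 0 = false := by
  unfold hB
  split_ifs with h1
  · simp
  · by_contra hcon
    rw [Bool.not_eq_false, Option.isSome_iff_exists] at hcon
    obtain ⟨x, hx⟩ := hcon
    exact absurd (evaln_bound hx) (by omega)

lemma fsB_unique {n s s' : ℕ} (h : fsB n s = true) (h' : fsB n s' = true) : s = s' := by
  unfold fsB at *
  simp only [Bool.and_eq_true, Bool.not_eq_true'] at h h'
  by_contra hne
  rcases Nat.lt_or_ge s s' with hlt | hge
  · rw [hB_mono (by omega : s + 1 ≤ s') h.1] at h'
    simp at h'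
  · have : s' < s := by omega
    rw [hB_mono (by omega : s' + 1 ≤ s) h'.1] at h
    simp at h
lemma halt_iff_fs (n : ℕ) : (∃ s, hB n s = true) ↔ ∃ s, fsB n s = true := by
  constructor
  · rintro ⟨s, hs⟩
    have hex : ∃ m, hB n m = true := ⟨s, hs⟩
    set m := Nat.find hex with hm
    have hm1 : hB n m = true := Nat.find_spec hex
    have hmpos : 1 ≤ m := by
      rcases Nat.eq_zero_or_pos m with h | h
      · rw [h, hB_zero] at hm1; simp at hm1
      · exact h
    refine ⟨m - 1, ?_⟩
    unfold fsB
    have h2 : hB n (m - 1) = false := by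
      have := Nat.find_min hex (m := m - 1) (by omega)
      simpa using this
    have h3 : m - 1 + 1 = m := by omega
    rw [h3, hm1, h2]
    rfl
  · rintro ⟨s, hs⟩
    unfold fsB at hs
    simp only [Bool.and_eq_true] at hs
    exact ⟨s + 1, hs.1⟩

lemma pB_partner {n t : ℕ} (h : pB n t = true) : t ≠ 0 := by
  unfold pB at h
  simp only [Bool.and_eq_true, decide_eq_true_eq] at h
  omega

lemma e1_equiv : Equivalence E1 := by
  constructor
  · intro x; exact Or.inl rfl
  · intro x y h
    rcases h with h | ⟨h1, h2 | h2⟩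
    · exact Or.inl h.symm
    · exact Or.inr ⟨h1.symm, Or.inr ⟨h2.1, h1 ▸ h2.2⟩⟩
    · exact Or.inr ⟨h1.symm, Or.inl ⟨h2.1, h1 ▸ h2.2⟩⟩
  · intro x y z hxy hyz
    rcases hxy with h | ⟨h1, h2⟩
    · exact h ▸ hyz
    rcases hyz with h | ⟨h1', h2'⟩
    · exact h ▸ Or.inr ⟨h1, h2⟩
    rcases h2 with ⟨hx0, hp⟩ | ⟨hy0, hp⟩
    · rcases h2' with ⟨hy0', hp'⟩ | ⟨hz0', hp'⟩
      · exact absurd hy0' (pB_partner hp)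
      · -- x.2 = 0, z.2 = 0, same n: x = z
        left
        have hx2 : x = Nat.pair x.unpair.1 x.unpair.2 := (Nat.pair_unpair x).symm
        have hz2 : z = Nat.pair z.unpair.1 z.unpair.2 := (Nat.pair_unpair z).symm
        rw [hx2, hz2, hx0, hz0', h1, h1']
    · rcases h2' with ⟨hy0', hp'⟩ | ⟨hz0', hp'⟩
      · -- x and z are both partners of y: equal by stage uniqueness
        left
        have hpz : pB x.unpair.1 z.unpair.2 = true := h1 ▸ hp'
        have hpx := hp
        unfold pB at hpx hpz
        simp only [Bool.and_eq_true, decide_eq_true_eq] at hpx hpz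
        have hst := fsB_unique hpx.2 hpz.2
        have hx2 : x = Nat.pair x.unpair.1 x.unpair.2 := (Nat.pair_unpair x).symm
        have hz2 : z = Nat.pair z.unpair.1 z.unpair.2 := (Nat.pair_unpair z).symm
        rw [hx2, hz2, h1, h1']
        congr 1
        omega
      · exact absurd hy0 (pB_partner (h1 ▸ hp'))

lemma e1_small : ∀ x y z, E1 x y → E1 y z → x = y ∨ y = z ∨ x = z := by
  intro x y z hxy hyz
  rcases hxy with h | ⟨h1, h2⟩
  · exact Or.inl h
  rcases hyz with h | ⟨h1', h2'⟩
  · exact Or.inr (Or.inl h)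
  right; right
  rcases h2 with ⟨hx0, hp⟩ | ⟨hy0, hp⟩
  · rcases h2' with ⟨hy0', hp'⟩ | ⟨hz0', hp'⟩
    · exact absurd hy0' (pB_partner hp)
    · have hx2 : x = Nat.pair x.unpair.1 x.unpair.2 := (Nat.pair_unpair x).symm
      have hz2 : z = Nat.pair z.unpair.1 z.unpair.2 := (Nat.pair_unpair z).symm
      rw [hx2, hz2, hx0, hz0', h1, h1']
  · rcases h2' with ⟨hy0', hp'⟩ | ⟨hz0', hp'⟩
    · -- y.2 = 0 in both: x and z are both partners of y at stages fsB
      have hpx := hp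
      have hpz : pB x.unpair.1 z.unpair.2 = true := h1 ▸ hp'
      unfold pB at hpx hpz
      simp only [Bool.and_eq_true, decide_eq_true_eq] at hpx hpz
      have := fsB_unique hpx.2 hpz.2
      have hx2 : x = Nat.pair x.unpair.1 x.unpair.2 := (Nat.pair_unpair x).symm
      have hz2 : z = Nat.pair z.unpair.1 z.unpair.2 := (Nat.pair_unpair z).symm
      rw [hx2, hz2, h1, h1']
      congr 1
      omega
    · exact absurd hy0 (pB_partner (h1 ▸ hp'))

instance e1_dec : ∀ x y, Decidable (E1 x y) := fun x y => by unfold E1; infer_instance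

lemma e1_comprel : ∃ f : ℕ → ℕ → Bool, Computable₂ f ∧ ∀ x y, E1 x y ↔ f x y = true := by
  refine ⟨fun x y => decide (E1 x y), ?_, fun x y => by simp⟩
  have hBp : Primrec₂ hB := by
    have h1 : Primrec₂ fun n s : ℕ => decide (1 ≤ s) :=
      (Primrec.nat_le.comp (Primrec.const 1) Primrec.snd).decide.to₂
    have h2 : Primrec₂ fun n s : ℕ =>
        (evaln s (Denumerable.ofNat Code (n / 2)) 0).isSome := by
      have he : Primrec fun p : ℕ × ℕ => evaln p.2 (Denumerable.ofNat Code (p.1 / 2)) 0 :=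
        primrec_evaln.comp
          (((Primrec.snd).pair
            ((Primrec.ofNat Code).comp (Primrec.nat_div.comp Primrec.fst (Primrec.const 2)))).pair
            (Primrec.const 0))
      exact (Primrec.option_isSome.comp he).to₂
    have h3 : PrimrecPred fun p : ℕ × ℕ => p.1 % 2 = 0 :=
      Primrec.eq.comp (Primrec.nat_mod.comp Primrec.fst (Primrec.const 2)) (Primrec.const 0)
    exact (Primrec.ite h3 h1 h2).to₂
  have hfsB : Primrec₂ fsB := by
    have h1 : Primrec fun p : ℕ × ℕ => hB p.1 (p.2 + 1) :=
      hBp.comp Primrec.fst (Primrec.succ.comp Primrec.snd)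
    have h2 : Primrec fun p : ℕ × ℕ => !(hB p.1 p.2) := by
      have := hBp.comp (Primrec.fst (α := ℕ) (β := ℕ)) Primrec.snd
      exact (Primrec.cond this (Primrec.const false) (Primrec.const true)).of_eq
        fun p => by cases h : hB p.1 p.2 <;> simp [h]
    have hx : Primrec fun p : ℕ × ℕ => fsB p.1 p.2 :=
      (Primrec.cond h1 h2 (Primrec.const false)).of_eq fun p => by
        unfold fsB; cases h : hB p.1 (p.2 + 1) <;> simp [h]
    exact hx.to₂
  have hpB : Primrec₂ pB := by
    have h1 : Primrec fun p : ℕ × ℕ => decide (1 ≤ p.2) :=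
      (Primrec.nat_le.comp (Primrec.const 1) Primrec.snd).decide
    have h2 : Primrec fun p : ℕ × ℕ => fsB p.1 (p.2 - 1) :=
      hfsB.comp Primrec.fst (Primrec.nat_sub.comp Primrec.snd (Primrec.const 1))
    have hx : Primrec fun p : ℕ × ℕ => pB p.1 p.2 :=
      (Primrec.cond h1 h2 (Primrec.const false)).of_eq fun p => by
        unfold pB; cases h : decide (1 ≤ p.2) <;> simp [h]
    exact hx.to₂
  have hP : PrimrecPred fun p : ℕ × ℕ => E1 p.1 p.2 := by
    have u1 : Primrec fun p : ℕ × ℕ => p.1.unpair.1 :=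
      Primrec.fst.comp (Primrec.unpair.comp Primrec.fst)
    have u2 : Primrec fun p : ℕ × ℕ => p.1.unpair.2 :=
      Primrec.snd.comp (Primrec.unpair.comp Primrec.fst)
    have v1 : Primrec fun p : ℕ × ℕ => p.2.unpair.1 :=
      Primrec.fst.comp (Primrec.unpair.comp Primrec.snd)
    have v2 : Primrec fun p : ℕ × ℕ => p.2.unpair.2 :=
      Primrec.snd.comp (Primrec.unpair.comp Primrec.snd)
    have c1 : PrimrecPred fun p : ℕ × ℕ => p.1 = p.2 := Primrec.eq.comp Primrec.fst Primrec.snd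
    have c2 : PrimrecPred fun p : ℕ × ℕ => p.1.unpair.1 = p.2.unpair.1 := Primrec.eq.comp u1 v1
    have c3 : PrimrecPred fun p : ℕ × ℕ => p.1.unpair.2 = 0 := Primrec.eq.comp u2 (Primrec.const 0)
    have c4 : PrimrecPred fun p : ℕ × ℕ => pB p.1.unpair.1 p.2.unpair.2 = true :=
      Primrec.eq.comp (hpB.comp u1 v2) (Primrec.const true)
    have c5 : PrimrecPred fun p : ℕ × ℕ => p.2.unpair.2 = 0 := Primrec.eq.comp v2 (Primrec.const 0)
    have c6 : PrimrecPred fun p : ℕ × ℕ => pB p.1.unpair.1 p.1.unpair.2 = true :=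
      Primrec.eq.comp (hpB.comp u1 u2) (Primrec.const true)
    exact (c1.or (c2.and ((c3.and c4).or (c5.and c6)))).of_eq fun p => by unfold E1; tauto
  exact Primrec₂.to_comp (hP.decide : Primrec fun p : ℕ × ℕ => decide (E1 p.1 p.2))

end E1Sect

section Final

open Nat.Partrec (Code)
open Nat.Partrec.Code

lemma e1_fst {x y : ℕ} (h : E1 x y) : x.unpair.1 = y.unpair.1 := by
  rcases h with h | ⟨h1, _⟩
  · rw [h]
  · exact h1

lemma pB_zero_right (n : ℕ) : pB n 0 = false := by
  unfold pB
  simp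

lemma sing_e1_infinite : (SingS E1).Infinite := by
  apply Set.infinite_of_injective_forall_mem (f := fun t : ℕ => Nat.pair 0 (t + 2))
  · intro a b hab
    simp only [Nat.pair_eq_pair] at hab
    omega
  · intro t y hy
    rcases hy with h | ⟨h1, h2⟩
    · exact h
    exfalso
    simp only [Nat.unpair_pair] at h1 h2
    rcases h2 with ⟨hy0, hp⟩ | ⟨h20, _⟩
    · rw [h1] at hp
      unfold pB fsB hB at hp
      simp at hp
    · omega

lemma pB_even (m : ℕ) : pB (2 * m) 1 = true := by
  unfold pB fsB hB
  simp

lemma dd_pair_even (m : ℕ) : Nat.pair (2 * m) 0 ∈ DD E1 := by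
  refine ⟨Nat.pair (2 * m) 1, ?_, ?_⟩
  · right
    simp [pB_even m]
  · intro h
    simp only [Nat.pair_eq_pair] at h
    omega

lemma minD_e1_infinite : (MinD E1).Infinite := by
  apply Set.infinite_of_injective_forall_mem
    (f := fun m : ℕ => mu E1 (Nat.pair (2 * m) 0))
  · intro a b hab
    have h1 : E1 (Nat.pair (2 * a) 0) (Nat.pair (2 * b) 0) :=
      (mu_eq_iff e1_equiv _ _).2 hab
    have := e1_fst h1
    simp only [Nat.unpair_pair] at this
    omega
  · intro m
    exact mu_mem_minD e1_equiv (dd_pair_even m)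

lemma sing_e0_infinite : (SingS E0).Infinite := by
  apply Set.infinite_of_injective_forall_mem (f := fun n : ℕ => 4 * n + 2)
  · intro a b hab; dsimp only at hab; omega
  · intro n y hy
    rcases hy with h | ⟨_, h2, _⟩
    · exact h
    · omega

lemma minD_e0_infinite : (MinD E0).Infinite := by
  apply Set.infinite_of_injective_forall_mem (f := fun n : ℕ => 4 * n)
  · intro a b hab; dsimp only at hab; omega
  · intro n
    constructor
    · refine ⟨4 * n + 1, Or.inr ⟨?_, ?_, ?_⟩, ?_⟩ <;> omega
    · intro y hy hR
      rcases hR with h | ⟨h1, _, h3⟩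
      · omega
      · have hy4 : y = 4 * (y / 4) + y % 4 := (Nat.div_add_mod y 4).symm.trans (by ring)
        omega

lemma iso_dd {R R' : ℕ → ℕ → Prop} {f : ℕ → ℕ} (hf : Function.Bijective f)
    (hpres : ∀ x y, R x y ↔ R' (f x) (f y)) (x : ℕ) : x ∈ DD R ↔ f x ∈ DD R' := by
  constructor
  · rintro ⟨y, h1, h2⟩
    exact ⟨f y, (hpres y x).1 h1, fun h => h2 (hf.1 h)⟩
  · rintro ⟨w, h1, h2⟩
    obtain ⟨y, rfl⟩ := hf.2 w
    exact ⟨y, (hpres y x).2 h1, fun h => h2 (congrArg f h)⟩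

lemma dd_e0_iff (a : ℕ) : a ∈ DD E0 ↔ a % 4 ≤ 1 := by
  constructor
  · rintro ⟨y, h1, h2⟩
    rcases h1 with h | ⟨_, h, _⟩
    · exact absurd h h2
    · exact h
  · intro h
    by_cases h0 : a % 4 = 0
    · refine ⟨a + 1, Or.inr ⟨?_, ?_, ?_⟩, ?_⟩ <;> omega
    · refine ⟨a - 1, Or.inr ⟨?_, ?_, ?_⟩, ?_⟩ <;> omega

lemma dd_pair_iff (n : ℕ) : Nat.pair n 0 ∈ DD E1 ↔ ∃ s, hB n s = true := by
  constructor
  · rintro ⟨y, h1, h2⟩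
    rcases h1 with h | ⟨h1, hp⟩
    · exact absurd h h2
    simp only [Nat.unpair_pair] at h1 hp
    rcases hp with ⟨_, hp⟩ | ⟨_, hp⟩
    · rw [h1, pB_zero_right] at hp
      simp at hp
    · rw [h1] at hp
      unfold pB at hp
      simp only [Bool.and_eq_true, decide_eq_true_eq] at hp
      exact (halt_iff_fs n).2 ⟨y.unpair.2 - 1, hp.2⟩
  · intro h
    obtain ⟨s, hs⟩ := (halt_iff_fs n).1 h
    refine ⟨Nat.pair n (s + 1), ?_, ?_⟩
    · right
      refine ⟨by simp, Or.inr ⟨by simp, ?_⟩⟩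
      simp only [Nat.unpair_pair]
      unfold pB
      simp only [Nat.add_sub_cancel, hs, Bool.and_true]
      simp
    · intro hc
      simp only [Nat.pair_eq_pair] at hc
      omega

lemma eval_dom_iff (c : Code) :
    (c.eval 0).Dom ↔ ∃ s, hB (2 * Encodable.encode c + 1) s = true := by
  have hodd : (2 * Encodable.encode c + 1) % 2 ≠ 0 := by omega
  have hdiv : (2 * Encodable.encode c + 1) / 2 = Encodable.encode c := by omega
  constructor
  · intro h
    obtain ⟨x, hx⟩ := Part.dom_iff_mem.1 h
    obtain ⟨k, hk⟩ := evaln_complete.1 hx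
    refine ⟨k, ?_⟩
    unfold hB
    rw [if_neg hodd, hdiv, Denumerable.ofNat_encode]
    exact Option.isSome_iff_exists.2 ⟨x, hk⟩
  · rintro ⟨s, hs⟩
    unfold hB at hs
    rw [if_neg hodd, hdiv, Denumerable.ofNat_encode] at hs
    obtain ⟨x, hx⟩ := Option.isSome_iff_exists.1 hs
    exact Part.dom_iff_mem.2 ⟨x, evaln_complete.2 ⟨s, hx⟩⟩

lemma e1_iso_e0 : ∃ f, IsIso E1 E0 f := by
  obtain ⟨f, hbij, hpres⟩ := iso_exists e1_equiv e0_equiv e1_small (fun _ _ _ h1 h2 => e0_small h1 h2)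
    sing_e1_infinite sing_e0_infinite minD_e1_infinite minD_e0_infinite
  exact ⟨f, hbij, hpres⟩

lemma e0_not_compcat : ¬ CompCat E0 := by
  intro h
  obtain ⟨f, hfc, hbij, hpres⟩ := h E1 e1_equiv e1_comprel e1_iso_e0
  apply ComputablePred.halting_problem 0
  rw [ComputablePred.computable_iff]
  refine ⟨fun c : Code => decide (f (Nat.pair (2 * Encodable.encode c + 1) 0) % 4 ≤ 1), ?_, ?_⟩
  · have h1 : Computable fun c : Code => f (Nat.pair (2 * Encodable.encode c + 1) 0) := by
      refine hfc.comp ?_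
      have h2 : Primrec fun c : Code => Nat.pair (2 * Encodable.encode c + 1) 0 :=
        Primrec₂.natPair.comp
          (Primrec.succ.comp (Primrec.nat_mul.comp (Primrec.const 2) Primrec.encode))
          (Primrec.const 0)
      exact h2.to_comp
    exact ((Primrec.nat_le.comp (Primrec.nat_mod.comp Primrec.id (Primrec.const 4))
      (Primrec.const 1)).decide.to_comp).comp h1
  · funext c
    apply propext
    rw [decide_eq_true_eq]
    calc (c.eval 0).Dom
        ↔ ∃ s, hB (2 * Encodable.encode c + 1) s = true := eval_dom_iff c
      _ ↔ Nat.pair (2 * Encodable.encode c + 1) 0 ∈ DD E1 :=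
          (dd_pair_iff (2 * Encodable.encode c + 1)).symm
      _ ↔ f (Nat.pair (2 * Encodable.encode c + 1) 0) ∈ DD E0 :=
          iso_dd ⟨hbij.1, hbij.2⟩ hpres _
      _ ↔ f (Nat.pair (2 * Encodable.encode c + 1) 0) % 4 ≤ 1 := dd_e0_iff _

end Final

/-- There is a computable equivalence structure that is computably bi-embeddably
categorical but not computably categorical. -/
theorem stmt1 : ∃ E : ℕ → ℕ → Prop,
    Equivalence E ∧ CompRelDec E ∧ CompBiembCat E ∧ ¬ CompCat E :=
  ⟨E0, e0_equiv, e0_comprel, e0_biembcat, e0_not_compcat⟩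
end

section
/- Let h : ℕ → ℕ → ℕ be a total computable function such that for every x: h x 0 ≥ 1, the sequence s ↦ h x s is nondecreasing, and it is eventually constant with limit f(x). Then there exist a computable equivalence relation E on ℕ and a computable injective function a : ℕ → ℕ such that distinct values of a lie in distinct E-classes, every natural number is E-equivalent to some a(x), and for every x the E-equivalence class of a(x) has exactly f(x) elements. -/
namespace Stmt12Aux

/-- top-up amount for class `x` at stage `s`. -/
def dlt (h : ℕ → ℕ → ℕ) (s x : ℕ) : ℕ := h x s - (if x < s then h x (s - 1) else 0)

/-- first `k` blocks of stage `s`. -/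
def auxL (h : ℕ → ℕ → ℕ) (s k : ℕ) : List ℕ :=
  Nat.rec [] (fun j ih => ih ++ List.replicate (dlt h s j) j) k

/-- the full stage-`s` block. -/
def blk (h : ℕ → ℕ → ℕ) (s : ℕ) : List ℕ := auxL h s (s + 1)

/-- concatenation of the first `n` stages. -/
def flatL (h : ℕ → ℕ → ℕ) (n : ℕ) : List ℕ :=
  Nat.rec [] (fun s ih => ih ++ blk h s) n

/-- the color of `n`. -/
def gfun (h : ℕ → ℕ → ℕ) (n : ℕ) : ℕ := (flatL h (n + 1)).getD n 0

/-- the first position with color `x`. -/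
def afun (h : ℕ → ℕ → ℕ) (x : ℕ) : ℕ := (flatL h x).length + (auxL h x x).length

variable {h : ℕ → ℕ → ℕ}

theorem auxL_succ (s k : ℕ) : auxL h s (k + 1) = auxL h s k ++ List.replicate (dlt h s k) k := rfl

theorem flatL_succ (n : ℕ) : flatL h (n + 1) = flatL h n ++ blk h n := rfl

theorem count_auxL (s : ℕ) : ∀ k x, (auxL h s k).count x = if x < k then dlt h s x else 0 := by
  intro k
  induction k with
  | zero => intro x; simp [auxL]
  | succ k ih =>
    intro x
    rw [auxL_succ, List.count_append, ih, List.count_replicate]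
    rcases lt_trichotomy x k with hc | hc | hc
    · simp [hc, Nat.lt_succ_of_lt hc, hc.ne']
    · subst hc; simp
    · rw [if_neg (by omega : ¬ x < k), if_neg (by omega : ¬ x < k + 1)]
      simp [hc.ne]

theorem count_blk (s x : ℕ) : (blk h s).count x = if x ≤ s then dlt h s x else 0 := by
  rw [blk, count_auxL]; simp [Nat.lt_succ_iff]

theorem hmono' (hmono : ∀ x s, h x s ≤ h x (s + 1)) (x : ℕ) : Monotone (h x) :=
  monotone_nat_of_le_succ (hmono x)

theorem count_flatL (hmono : ∀ x s, h x s ≤ h x (s + 1)) :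
    ∀ n x, (flatL h n).count x = if x < n then h x (n - 1) else 0 := by
  intro n
  induction n with
  | zero => intro x; simp [flatL]
  | succ n ih =>
    intro x
    rw [flatL_succ, List.count_append, ih, count_blk]
    simp only [Nat.succ_sub_one, Nat.add_sub_cancel]
    rcases lt_trichotomy x n with hc | hc | hc
    · rw [if_pos hc, if_pos hc.le, if_pos (by omega), dlt, if_pos hc]
      have := hmono' hmono x (Nat.sub_le n 1)
      omega
    · subst hc
      rw [if_neg (lt_irrefl x), if_pos le_rfl, if_pos (Nat.lt_succ_self x), dlt,
        if_neg (lt_irrefl x)]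
      simp
    · rw [if_neg (by omega), if_neg (by omega), if_neg (by omega)]

theorem one_le_len_blk (h1 : ∀ x, 1 ≤ h x 0) (hmono : ∀ x s, h x s ≤ h x (s + 1)) (s : ℕ) :
    1 ≤ (blk h s).length := by
  have hc : (blk h s).count s = dlt h s s := by rw [count_blk, if_pos le_rfl]
  have : 1 ≤ dlt h s s := by
    rw [dlt, if_neg (lt_irrefl s)]
    have := (hmono' hmono s) (Nat.zero_le s)
    have := h1 s
    omega
  calc 1 ≤ (blk h s).count s := by omega
    _ ≤ (blk h s).length := List.count_le_length

theorem le_len_flatL (h1 : ∀ x, 1 ≤ h x 0) (hmono : ∀ x s, h x s ≤ h x (s + 1)) (n : ℕ) :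
    n ≤ (flatL h n).length := by
  induction n with
  | zero => simp
  | succ n ih =>
    rw [flatL_succ, List.length_append]
    have := one_le_len_blk h1 hmono n
    omega

theorem flatL_prefix {n m : ℕ} (hnm : n ≤ m) : ∃ t, flatL h m = flatL h n ++ t := by
  induction m with
  | zero => exact ⟨[], by simp [Nat.le_zero.1 hnm]⟩
  | succ m ih =>
    rcases Nat.lt_or_ge n (m + 1) with hc | hc
    · obtain ⟨t, ht⟩ := ih (Nat.lt_succ_iff.1 hc)
      exact ⟨t ++ blk h m, by rw [flatL_succ, ht, List.append_assoc]⟩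
    · have : n = m + 1 := le_antisymm hnm hc
      exact ⟨[], by simp [this]⟩

theorem gfun_eq (h1 : ∀ x, 1 ≤ h x 0) (hmono : ∀ x s, h x s ≤ h x (s + 1)) {n m : ℕ}
    (hn : n < (flatL h m).length) : (flatL h m).getD n 0 = gfun h n := by
  rcases le_total m (n + 1) with hc | hc
  · obtain ⟨t, ht⟩ := flatL_prefix (h := h) hc
    rw [gfun, ht, List.getD_append _ _ _ _ hn]
  · obtain ⟨t, ht⟩ := flatL_prefix (h := h) hc
    have hn' : n < (flatL h (n + 1)).length := le_len_flatL h1 hmono (n + 1)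
    rw [gfun, ht, List.getD_append _ _ _ _ hn']

theorem afun_lt (h1 : ∀ x, 1 ≤ h x 0) (hmono : ∀ x s, h x s ≤ h x (s + 1)) (x : ℕ) :
    afun h x < (flatL h (x + 1)).length := by
  have hd : dlt h x x = h x x := by rw [dlt, if_neg (lt_irrefl x)]; simp
  have h1x : 1 ≤ h x x := le_trans (h1 x) (hmono' hmono x (Nat.zero_le x))
  rw [flatL_succ, blk, auxL_succ, List.length_append, List.length_append, afun,
    List.length_replicate, hd]
  omega

theorem gfun_afun (h1 : ∀ x, 1 ≤ h x 0) (hmono : ∀ x s, h x s ≤ h x (s + 1)) (x : ℕ) :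
    gfun h (afun h x) = x := by
  have hd : dlt h x x = h x x := by rw [dlt, if_neg (lt_irrefl x)]; simp
  have h1x : 1 ≤ h x x := le_trans (h1 x) (hmono' hmono x (Nat.zero_le x))
  rw [← gfun_eq h1 hmono (afun_lt h1 hmono x), flatL_succ, afun,
    List.getD_append_right _ _ _ _ (Nat.le_add_right _ _), Nat.add_sub_cancel_left,
    blk, auxL_succ, List.getD_append_right _ _ _ _ le_rfl, Nat.sub_self, hd]
  obtain ⟨k, hk⟩ : ∃ k, h x x = k + 1 := ⟨h x x - 1, by omega⟩
  rw [hk, List.replicate_succ, List.getD_cons_zero]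

theorem countP_range : ∀ (l : List ℕ) (x : ℕ),
    ((List.range l.length).filter (fun i => l.getD i 0 == x)).length = l.count x := by
  intro l
  induction l with
  | nil => intro x; simp
  | cons a t ih =>
    intro x
    rw [List.length_cons, List.range_succ_eq_map, List.filter_cons, List.filter_map]
    have hcomp : ((fun i => (a :: t).getD i 0 == x) ∘ (· + 1)) = fun i => t.getD i 0 == x := by
      funext i; simp [Function.comp]
    rw [hcomp]
    by_cases hax : a = x
    · subst hax
      simp only [List.getD_eq_getElem?_getD] at ih
      simp [List.count_cons, ih]
    · have : ((a :: t).getD 0 0 == x) = false := by simp [hax]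
      simp only [List.getD_cons_zero] at this
      rw [if_neg (by simp [this])]
      simp only [List.getD_eq_getElem?_getD] at ih
      simp [List.count_cons, ih, Ne.symm hax, hax]

theorem class_eq (h1 : ∀ x, 1 ≤ h x 0) (hmono : ∀ x s, h x s ≤ h x (s + 1))
    {f : ℕ → ℕ} {x S : ℕ} (hS : ∀ s, S ≤ s → h x s = f x) :
    {n | gfun h n = x} =
      ↑(((List.range (flatL h (S + x + 1)).length).filter
          (fun i => (flatL h (S + x + 1)).getD i 0 == x)).toFinset) ∧
    (((List.range (flatL h (S + x + 1)).length).filter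
          (fun i => (flatL h (S + x + 1)).getD i 0 == x)).toFinset).card = f x := by
  set N := S + x + 1 with hN
  set L := (flatL h N).length with hL
  have hLN : N ≤ L := le_len_flatL h1 hmono N
  have hcountN : (flatL h N).count x = f x := by
    rw [count_flatL hmono, if_pos (by omega), hS (N - 1) (by omega)]
  have hnodup : ((List.range L).filter (fun i => (flatL h N).getD i 0 == x)).Nodup :=
    (List.nodup_range).filter _
  have hmem : ∀ n, n ∈ ((List.range L).filter (fun i => (flatL h N).getD i 0 == x)).toFinset ↔
      n < L ∧ (flatL h N).getD n 0 = x := by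
    intro n
    rw [List.mem_toFinset, List.mem_filter, List.mem_range]
    simp
  have key : ∀ n, gfun h n = x → n < L := by
    intro n hg
    by_contra hc
    push_neg at hc
    obtain ⟨t, ht⟩ := flatL_prefix (h := h) (show N ≤ n + 1 by omega)
    have hlen : n < (flatL h (n + 1)).length := le_len_flatL h1 hmono (n + 1)
    have hcount : (flatL h (n + 1)).count x = f x := by
      rw [count_flatL hmono, if_pos (by omega), Nat.add_sub_cancel, hS n (by omega)]
    have htlen : n - L < t.length := by
      rw [ht, List.length_append] at hlen
      omega
    have hget : t.getD (n - L) 0 = x := by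
      rw [← hg, ← gfun_eq h1 hmono hlen, ht, List.getD_append_right _ _ _ _ (by omega)]
    have hmemt : x ∈ t := by
      rw [← hget, List.getD_eq_getElem _ _ htlen]
      exact List.getElem_mem _
    have : f x + 1 ≤ (flatL h (n + 1)).count x := by
      rw [ht, List.count_append, hcountN]
      have := List.count_pos_iff.2 hmemt
      omega
    omega
  constructor
  · ext n
    simp only [Set.mem_setOf_eq, Finset.coe_sort_coe, Finset.mem_coe, hmem]
    constructor
    · intro hg
      refine ⟨key n hg, ?_⟩
      rw [gfun_eq h1 hmono (show n < (flatL h N).length from key n hg), hg]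
    · rintro ⟨hn, hg⟩
      rw [← gfun_eq h1 hmono (show n < (flatL h N).length from hn), hg]
  · rw [List.toFinset_card_of_nodup hnodup]
    have := countP_range (flatL h N) x
    rw [← hL] at this
    rw [this, hcountN]

section Computability

theorem dlt_comp (hcomp : Computable₂ h) : Computable₂ (dlt h) := by
  have hlt : Computable fun p : ℕ × ℕ => decide (p.2 < p.1) :=
    (Primrec.nat_lt.comp Primrec.snd Primrec.fst).decide.to_comp
  have hsub : Computable₂ ((· - ·) : ℕ → ℕ → ℕ) := Primrec.nat_sub.to_comp
  have h2 : Computable fun p : ℕ × ℕ => h p.2 (p.1 - 1) :=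
    hcomp.comp Computable.snd (hsub.comp Computable.fst (Computable.const 1))
  have h3 : Computable fun p : ℕ × ℕ => (if p.2 < p.1 then h p.2 (p.1 - 1) else 0) := by
    have := Computable.cond hlt h2 (Computable.const 0)
    refine this.of_eq fun p => ?_
    by_cases hP : p.2 < p.1 <;> simp [hP]
  exact (hsub.comp (hcomp.comp Computable.snd Computable.fst) h3).to₂

theorem replicate_comp : Computable₂ (fun n (a : ℕ) => List.replicate n a) := by
  have := Computable.nat_rec (f := fun p : ℕ × ℕ => p.1)
    (g := fun _ : ℕ × ℕ => ([] : List ℕ))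
    (h := fun (p : ℕ × ℕ) (q : ℕ × List ℕ) => p.2 :: q.2)
    Computable.fst (Computable.const [])
    (Computable.list_cons.comp (Computable.snd.comp Computable.fst) (Computable.snd.comp Computable.snd)).to₂
  have H : Computable fun p : ℕ × ℕ => List.replicate p.1 p.2 := by
    refine this.of_eq fun p => ?_
    obtain ⟨n, a⟩ := p
    show Nat.rec [] (fun _ IH => a :: IH) n = List.replicate n a
    induction n with
    | zero => rfl
    | succ n ih => rw [List.replicate_succ]; exact congrArg _ ih
  exact H.to₂

theorem auxL_comp (hcomp : Computable₂ h) : Computable₂ (auxL h) := by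
  have := Computable.nat_rec (f := fun p : ℕ × ℕ => p.2)
    (g := fun _ : ℕ × ℕ => ([] : List ℕ))
    (h := fun (p : ℕ × ℕ) (q : ℕ × List ℕ) => q.2 ++ List.replicate (dlt h p.1 q.1) q.1)
    Computable.snd (Computable.const [])
    ((Computable.list_append.comp (Computable.snd.comp Computable.snd)
      (replicate_comp.comp
        ((dlt_comp hcomp).comp (Computable.fst.comp Computable.fst)
          (Computable.fst.comp Computable.snd))
        (Computable.fst.comp Computable.snd))).to₂)
  exact (this.of_eq fun p => rfl).to₂

theorem blk_comp (hcomp : Computable₂ h) : Computable (blk h) :=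
  (auxL_comp hcomp).comp Computable.id (Computable.succ)

theorem flatL_comp (hcomp : Computable₂ h) : Computable (flatL h) := by
  have := Computable.nat_rec (f := fun n : ℕ => n)
    (g := fun _ : ℕ => ([] : List ℕ))
    (h := fun (_ : ℕ) (q : ℕ × List ℕ) => q.2 ++ blk h q.1)
    Computable.id (Computable.const [])
    ((Computable.list_append.comp (Computable.snd.comp Computable.snd)
      ((blk_comp hcomp).comp (Computable.fst.comp Computable.snd))).to₂)
  exact this.of_eq fun n => rfl

theorem gfun_comp (hcomp : Computable₂ h) : Computable (gfun h) := by
  have hget : Computable₂ (fun (l : List ℕ) (n : ℕ) => l.getD n 0) :=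
    (Primrec.list_getD 0).to_comp
  exact hget.comp ((flatL_comp hcomp).comp Computable.succ) Computable.id

theorem afun_comp (hcomp : Computable₂ h) : Computable (afun h) := by
  have hadd : Computable₂ ((· + ·) : ℕ → ℕ → ℕ) := Primrec.nat_add.to_comp
  exact hadd.comp (Computable.list_length.comp (flatL_comp hcomp))
    (Computable.list_length.comp ((auxL_comp hcomp).comp Computable.id Computable.id))

end Computability

end Stmt12Aux

/-- For every limitwise monotonic function `f` (with approximation `h`, always `≥ 1`)
there is a computable equivalence structure with a computable transversal `a` such
that the class of `a x` has exactly `f x` elements. -/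



theorem stmt12 (h : ℕ → ℕ → ℕ) (hcomp : Computable₂ h) (f : ℕ → ℕ)
    (h1 : ∀ x, 1 ≤ h x 0)
    (hmono : ∀ x s, h x s ≤ h x (s + 1))
    (hlim : ∀ x, ∃ S, ∀ s, S ≤ s → h x s = f x) :
    ∃ E : ℕ → ℕ → Prop, Equivalence E ∧ CompRelDec E ∧
      ∃ a : ℕ → ℕ, Computable a ∧ Function.Injective a ∧
        (∀ x y, x ≠ y → ¬ E (a x) (a y)) ∧
        (∀ z, ∃ x, E z (a x)) ∧
        (∀ x, (classOf E (a x)).Finite ∧ (classOf E (a x)).ncard = f x) := by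
  classical
  refine ⟨fun z w => Stmt12Aux.gfun h z = Stmt12Aux.gfun h w,
    ⟨fun _ => rfl, fun hxy => hxy.symm, fun hxy hyz => hxy.trans hyz⟩, ?_, Stmt12Aux.afun h,
    Stmt12Aux.afun_comp hcomp, ?_, ?_, ?_, ?_⟩
  · refine ⟨fun z w => decide (Stmt12Aux.gfun h z = Stmt12Aux.gfun h w), ?_, ?_⟩
    · have heq : Computable₂ fun a b : ℕ => decide (a = b) := Primrec.eq.decide.to_comp
      exact (heq.comp ((Stmt12Aux.gfun_comp hcomp).comp Computable.fst)
        ((Stmt12Aux.gfun_comp hcomp).comp Computable.snd)).to₂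
    · intro x y; simp
  · intro x y hxy
    have := congrArg (Stmt12Aux.gfun h) hxy
    rwa [Stmt12Aux.gfun_afun h1 hmono, Stmt12Aux.gfun_afun h1 hmono] at this
  · intro x y hxy hE
    rw [Stmt12Aux.gfun_afun h1 hmono, Stmt12Aux.gfun_afun h1 hmono] at hE
    exact hxy hE
  · intro z
    exact ⟨Stmt12Aux.gfun h z, (Stmt12Aux.gfun_afun h1 hmono _).symm⟩
  · intro x
    obtain ⟨S, hS⟩ := hlim x
    obtain ⟨hset, hcard⟩ := Stmt12Aux.class_eq h1 hmono hS
    have hclass : classOf (fun z w => Stmt12Aux.gfun h z = Stmt12Aux.gfun h w)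
        (Stmt12Aux.afun h x) = {n | Stmt12Aux.gfun h n = x} := by
      ext n
      simp [classOf, Stmt12Aux.gfun_afun h1 hmono]
    rw [hclass, hset]
    exact ⟨Finset.finite_toSet _, by rw [Set.ncard_coe_finset, hcard]⟩
end
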